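/- arXiv:1508.00204 — 2 statements merged into one kernel-verified Lean document; each statement's English description precedes it below -/
import Mathlib

section
/- For real parameters λ₁, λ₂ > 0, exponents α₁, α₂ ≥ 0, γ > -1 with α₁ + α₂ - γ < 1, and ε > 0, the integral ∫_{|x|≤ε} |x|^γ ⟨x/λ₁⟩^{-α₁} ⟨x/λ₂⟩^{-α₂} dx over the real line is comparable (up to constants depending only on α₁, α₂, γ) to ε^{γ+1} ⟨ε/λ₁⟩^{-α₁} ⟨ε/λ₂⟩^{-α₂}. -/
open MeasureTheory

/-- Japanese bracket `⟨y⟩ = (1+y²)^{1/2}`. -/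
noncomputable def jb (y : ℝ) : ℝ := Real.sqrt (1 + y ^ 2)

/-!
Since `⟨y⟩` is increasing in `|y|` while `⟨y⟩ / |y|` is decreasing, every `x` with
`0 < |x| ≤ ε` satisfies `⟨ε/λ⟩^{-α} ≤ ⟨x/λ⟩^{-α} ≤ (ε/|x|)^α ⟨ε/λ⟩^{-α}`. Integrating these
bounds against `|x|^γ` gives both estimates, by `∫_{|x| ≤ ε} |x|^r dx = 2 ε^{r+1} / (r+1)` with
`r = γ` for the lower one and `r = γ - α₁ - α₂ > -1` for the upper one.
-/

open Set

theorem integral_abs_rpow_abs_le {r ε : ℝ} (hr : -1 < r) (hε : 0 ≤ ε) :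
    ∫ x in {x : ℝ | |x| ≤ ε}, |x| ^ r = 2 * (ε ^ (r + 1) / (r + 1)) := by
  have hind : ∀ x : ℝ, {x : ℝ | |x| ≤ ε}.indicator (fun x => |x| ^ r) x
      = (Iic ε).indicator (fun y => y ^ r) |x| := fun x =>
    indicator_comp_right (f := fun x : ℝ => |x|) (s := Iic ε) (g := fun y => y ^ r) (x := x)
  rw [← integral_indicator (measurableSet_le continuous_abs.measurable measurable_const),
    funext hind, integral_comp_abs, setIntegral_indicator measurableSet_Iic, Ioi_inter_Iic,
    ← intervalIntegral.integral_of_le hε, integral_rpow (Or.inl hr),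
    Real.zero_rpow (by linarith), sub_zero]

theorem integrableOn_abs_rpow_abs_le {r ε : ℝ} (hr : -1 < r) (hε : 0 < ε) :
    IntegrableOn (fun x : ℝ => |x| ^ r) {x : ℝ | |x| ≤ ε} :=
  .of_integral_ne_zero <| by
    rw [integral_abs_rpow_abs_le hr hε.le]
    have : 0 < r + 1 := by linarith
    positivity

theorem jb_pos (y : ℝ) : 0 < jb y := Real.sqrt_pos.2 (by positivity)

theorem one_le_jb (y : ℝ) : 1 ≤ jb y := Real.one_le_sqrt.2 (by nlinarith)

@[fun_prop]
theorem continuous_jb : Continuous jb := by unfold jb; fun_prop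

theorem jb_le_jb {a b : ℝ} (hab : |a| ≤ |b|) : jb a ≤ jb b :=
  Real.sqrt_le_sqrt (by nlinarith [sq_le_sq.2 hab])

theorem jb_le_mul_jb {a b : ℝ} (ha : a ≠ 0) (hab : |a| ≤ |b|) : jb b ≤ |b| / |a| * jb a := by
  have ha' : 0 < |a| := abs_pos.2 ha
  have ht : 1 ≤ |b| / |a| := (one_le_div ha').2 hab
  have hsq : (|b| / |a|) ^ 2 * a ^ 2 = b ^ 2 := by
    rw [div_pow, sq_abs, sq_abs, div_mul_cancel₀ _ (pow_ne_zero 2 ha)]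
  rw [jb, jb, ← Real.sqrt_sq (by positivity : 0 ≤ |b| / |a|), ← Real.sqrt_mul (sq_nonneg _)]
  exact Real.sqrt_le_sqrt (by nlinarith)

theorem jb_rpow_neg_le_of_abs_le {a b α : ℝ} (hα : 0 ≤ α) (hab : |a| ≤ |b|) :
    jb b ^ (-α) ≤ jb a ^ (-α) :=
  Real.rpow_le_rpow_of_nonpos (jb_pos a) (jb_le_jb hab) (neg_nonpos.2 hα)

theorem jb_rpow_neg_le_one (y : ℝ) {α : ℝ} (hα : 0 ≤ α) : jb y ^ (-α) ≤ 1 :=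
  Real.rpow_le_one_of_one_le_of_nonpos (one_le_jb y) (neg_nonpos.2 hα)

theorem jb_rpow_neg_le_mul {a b α : ℝ} (hα : 0 ≤ α) (ha : a ≠ 0) (hab : |a| ≤ |b|) :
    jb a ^ (-α) ≤ (|b| / |a|) ^ α * jb b ^ (-α) := by
  have ht : 0 < |b| / |a| := div_pos ((abs_pos.2 ha).trans_le hab) (abs_pos.2 ha)
  have hle : (|b| / |a|) ^ (-α) * jb a ^ (-α) ≤ jb b ^ (-α) := by
    rw [← Real.mul_rpow ht.le (jb_pos a).le]
    exact Real.rpow_le_rpow_of_nonpos (jb_pos b) (jb_le_mul_jb ha hab) (neg_nonpos.2 hα)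
  calc jb a ^ (-α) = (|b| / |a|) ^ α * ((|b| / |a|) ^ (-α) * jb a ^ (-α)) := by
        rw [Real.rpow_neg ht.le, mul_inv_cancel_left₀ (Real.rpow_pos_of_pos ht α).ne']
    _ ≤ (|b| / |a|) ^ α * jb b ^ (-α) := by gcongr

theorem abs_div_le_abs_div {a b c : ℝ} (hab : |a| ≤ b) : |a / c| ≤ |b / c| := by
  rw [abs_div, abs_div]
  exact div_le_div_of_nonneg_right (hab.trans (le_abs_self b)) (abs_nonneg c)

section Integrand

variable {l₁ l₂ α₁ α₂ γ ε : ℝ}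

theorem weighted_integrand_nonneg (x : ℝ) :
    0 ≤ |x| ^ γ * jb (x / l₁) ^ (-α₁) * jb (x / l₂) ^ (-α₂) := by
  have := jb_pos (x / l₁); have := jb_pos (x / l₂); positivity

theorem weighted_integrand_le_abs_rpow (hα₁ : 0 ≤ α₁) (hα₂ : 0 ≤ α₂) (x : ℝ) :
    |x| ^ γ * jb (x / l₁) ^ (-α₁) * jb (x / l₂) ^ (-α₂) ≤ |x| ^ γ := by
  have := jb_pos (x / l₁); have := jb_pos (x / l₂)
  calc |x| ^ γ * jb (x / l₁) ^ (-α₁) * jb (x / l₂) ^ (-α₂) ≤ |x| ^ γ * 1 * 1 := by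
        gcongr
        exacts [jb_rpow_neg_le_one _ hα₁, jb_rpow_neg_le_one _ hα₂]
    _ = |x| ^ γ := by ring

theorem mul_abs_rpow_le_weighted_integrand (hα₁ : 0 ≤ α₁) (hα₂ : 0 ≤ α₂) {x : ℝ}
    (hxε : |x| ≤ ε) :
    jb (ε / l₁) ^ (-α₁) * jb (ε / l₂) ^ (-α₂) * |x| ^ γ ≤
      |x| ^ γ * jb (x / l₁) ^ (-α₁) * jb (x / l₂) ^ (-α₂) := by
  have := jb_pos (x / l₁); have := jb_pos (ε / l₁); have := jb_pos (ε / l₂)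
  calc jb (ε / l₁) ^ (-α₁) * jb (ε / l₂) ^ (-α₂) * |x| ^ γ
      = |x| ^ γ * jb (ε / l₁) ^ (-α₁) * jb (ε / l₂) ^ (-α₂) := by ring
    _ ≤ |x| ^ γ * jb (x / l₁) ^ (-α₁) * jb (x / l₂) ^ (-α₂) := by
        gcongr |x| ^ γ * ?_ * ?_
        exacts [jb_rpow_neg_le_of_abs_le hα₁ (abs_div_le_abs_div hxε),
          jb_rpow_neg_le_of_abs_le hα₂ (abs_div_le_abs_div hxε)]

theorem weighted_integrand_le_mul_abs_rpow (hl₁ : l₁ ≠ 0) (hl₂ : l₂ ≠ 0) (hα₁ : 0 ≤ α₁)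
    (hα₂ : 0 ≤ α₂) {x : ℝ} (hx : x ≠ 0) (hxε : |x| ≤ ε) :
    |x| ^ γ * jb (x / l₁) ^ (-α₁) * jb (x / l₂) ^ (-α₂) ≤
      ε ^ (α₁ + α₂) * (jb (ε / l₁) ^ (-α₁) * jb (ε / l₂) ^ (-α₂)) * |x| ^ (γ - (α₁ + α₂)) := by
  have hx' : 0 < |x| := abs_pos.2 hx
  have hε : 0 < ε := hx'.trans_le hxε
  have hratio : ∀ l ≠ (0 : ℝ), |ε / l| / |x / l| = ε / |x| := fun l hl => by
    rw [abs_div, abs_div, abs_of_pos hε, div_div_div_cancel_right₀ (abs_ne_zero.2 hl)]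
  have h₁ := jb_rpow_neg_le_mul hα₁ (div_ne_zero hx hl₁) (abs_div_le_abs_div (c := l₁) hxε)
  have h₂ := jb_rpow_neg_le_mul hα₂ (div_ne_zero hx hl₂) (abs_div_le_abs_div (c := l₂) hxε)
  rw [hratio l₁ hl₁] at h₁
  rw [hratio l₂ hl₂] at h₂
  have := jb_pos (x / l₁); have := jb_pos (x / l₂); have := jb_pos (ε / l₁)
  have := jb_pos (ε / l₂)
  calc |x| ^ γ * jb (x / l₁) ^ (-α₁) * jb (x / l₂) ^ (-α₂)
      ≤ |x| ^ γ * ((ε / |x|) ^ α₁ * jb (ε / l₁) ^ (-α₁))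
          * ((ε / |x|) ^ α₂ * jb (ε / l₂) ^ (-α₂)) := by gcongr
    _ = ε ^ (α₁ + α₂) * (jb (ε / l₁) ^ (-α₁) * jb (ε / l₂) ^ (-α₂)) * |x| ^ (γ - (α₁ + α₂)) := by
        rw [Real.div_rpow hε.le hx'.le, Real.div_rpow hε.le hx'.le, Real.rpow_add hε,
          Real.rpow_sub hx', Real.rpow_add hx']
        field_simp

theorem integrableOn_weighted_integrand (hα₁ : 0 ≤ α₁) (hα₂ : 0 ≤ α₂) (hγ : -1 < γ)
    (hε : 0 < ε) :
    IntegrableOn (fun x : ℝ => |x| ^ γ * jb (x / l₁) ^ (-α₁) * jb (x / l₂) ^ (-α₂))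
      {x : ℝ | |x| ≤ ε} :=
  (integrableOn_abs_rpow_abs_le hγ hε).mono' (by fun_prop : Measurable _).aestronglyMeasurable <|
    .of_forall fun x => by
      rw [Real.norm_of_nonneg (weighted_integrand_nonneg x)]
      exact weighted_integrand_le_abs_rpow hα₁ hα₂ x

theorem le_integral_weighted_integrand (hα₁ : 0 ≤ α₁) (hα₂ : 0 ≤ α₂) (hγ : -1 < γ)
    (hε : 0 < ε) :
    2 / (γ + 1) * (ε ^ (γ + 1) * jb (ε / l₁) ^ (-α₁) * jb (ε / l₂) ^ (-α₂)) ≤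
      ∫ x in {x : ℝ | |x| ≤ ε}, |x| ^ γ * jb (x / l₁) ^ (-α₁) * jb (x / l₂) ^ (-α₂) :=
  calc 2 / (γ + 1) * (ε ^ (γ + 1) * jb (ε / l₁) ^ (-α₁) * jb (ε / l₂) ^ (-α₂))
      = ∫ x in {x : ℝ | |x| ≤ ε}, jb (ε / l₁) ^ (-α₁) * jb (ε / l₂) ^ (-α₂) * |x| ^ γ := by
        rw [integral_const_mul, integral_abs_rpow_abs_le hγ hε.le]
        ring
    _ ≤ _ :=
        setIntegral_mono_on ((integrableOn_abs_rpow_abs_le hγ hε).const_mul _)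
          (integrableOn_weighted_integrand hα₁ hα₂ hγ hε)
          (measurableSet_le (by fun_prop) measurable_const)
          fun _ hx => mul_abs_rpow_le_weighted_integrand hα₁ hα₂ hx

theorem integral_weighted_integrand_le (hl₁ : l₁ ≠ 0) (hl₂ : l₂ ≠ 0) (hα₁ : 0 ≤ α₁)
    (hα₂ : 0 ≤ α₂) (h : α₁ + α₂ - γ < 1) (hε : 0 < ε) :
    ∫ x in {x : ℝ | |x| ≤ ε}, |x| ^ γ * jb (x / l₁) ^ (-α₁) * jb (x / l₂) ^ (-α₂) ≤
      2 / (γ + 1 - (α₁ + α₂)) * (ε ^ (γ + 1) * jb (ε / l₁) ^ (-α₁) * jb (ε / l₂) ^ (-α₂)) := by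
  have hr : -1 < γ - (α₁ + α₂) := by linarith
  have hS : MeasurableSet {x : ℝ | |x| ≤ ε} := measurableSet_le (by fun_prop) measurable_const
  calc ∫ x in {x : ℝ | |x| ≤ ε}, |x| ^ γ * jb (x / l₁) ^ (-α₁) * jb (x / l₂) ^ (-α₂)
      ≤ ∫ x in {x : ℝ | |x| ≤ ε}, ε ^ (α₁ + α₂) * (jb (ε / l₁) ^ (-α₁) * jb (ε / l₂) ^ (-α₂))
          * |x| ^ (γ - (α₁ + α₂)) := by
        refine integral_mono_of_nonneg (.of_forall fun x => weighted_integrand_nonneg x)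
          ((integrableOn_abs_rpow_abs_le hr hε).const_mul _) ((ae_restrict_iff' hS).2 ?_)
        filter_upwards [Measure.ae_ne volume 0] with x hx hxε
        exact weighted_integrand_le_mul_abs_rpow hl₁ hl₂ hα₁ hα₂ hx hxε
    _ = 2 / (γ + 1 - (α₁ + α₂)) * (ε ^ (γ + 1) * jb (ε / l₁) ^ (-α₁) * jb (ε / l₂) ^ (-α₂)) := by
        have hpow : ε ^ (γ + 1) = ε ^ (α₁ + α₂) * ε ^ (γ - (α₁ + α₂) + 1) := by
          rw [← Real.rpow_add hε]; ring_nf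
        rw [integral_const_mul, integral_abs_rpow_abs_le hr hε.le, hpow]
        ring

end Integrand

theorem stmt_2 (α₁ α₂ γ : ℝ) (hα₁ : 0 ≤ α₁) (hα₂ : 0 ≤ α₂) (hγ : -1 < γ)
    (h : α₁ + α₂ - γ < 1) :
    ∃ c C : ℝ, 0 < c ∧ 0 < C ∧
      ∀ l₁ l₂ ε : ℝ, 0 < l₁ → 0 < l₂ → 0 < ε →
        (c * (ε ^ (γ + 1) * jb (ε / l₁) ^ (-α₁) * jb (ε / l₂) ^ (-α₂)) ≤
            ∫ x in {x : ℝ | |x| ≤ ε},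
              |x| ^ γ * jb (x / l₁) ^ (-α₁) * jb (x / l₂) ^ (-α₂)) ∧
          (∫ x in {x : ℝ | |x| ≤ ε},
              |x| ^ γ * jb (x / l₁) ^ (-α₁) * jb (x / l₂) ^ (-α₂)) ≤
            C * (ε ^ (γ + 1) * jb (ε / l₁) ^ (-α₁) * jb (ε / l₂) ^ (-α₂)) :=
  ⟨2 / (γ + 1), 2 / (γ + 1 - (α₁ + α₂)), div_pos two_pos (by linarith),
    div_pos two_pos (by linarith), fun _ _ _ hl₁ hl₂ hε =>
      ⟨le_integral_weighted_integrand hα₁ hα₂ hγ hε,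
        integral_weighted_integrand_le hl₁.ne' hl₂.ne' hα₁ hα₂ h hε⟩⟩
end

section
/- Let x ∈ ℝⁿ \ {0}, φ_x(ξ) := |ξ|⁴ + ξ·x, and ξ_st := -x/(4^{1/3}|x|^{2/3}). If ξ ∈ ℝⁿ satisfies ||ξ| - |ξ_st|| ≥ 1, then |∇φ_x(ξ)| ≥ c |ξ_st|² for a universal constant c > 0; moreover if |ξ| ≥ 2|ξ_st| and |ξ| ≥ 1 then |∇φ_x(ξ)| ≥ c|ξ|³. -/
/-!
The gradient of `φ_x(ξ) = ‖ξ‖⁴ + ⟪ξ, x⟫` is `4‖ξ‖²ξ + x`, and `‖x‖ = 4‖ξ_st‖³`, so the reverse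
triangle inequality gives `‖∇φ_x(ξ)‖ ≥ 4 |‖ξ‖³ - ‖ξ_st‖³|`. Both bounds then follow (with `c = 1`)
from `r³ - s³ = (r - s)(r² + rs + s²)` for `r = ‖ξ‖`, `s = ‖ξ_st‖`.
-/

open InnerProductSpace

theorem hasGradientAt_norm_pow_four_add_inner {E : Type*} [NormedAddCommGroup E]
    [InnerProductSpace ℝ E] [CompleteSpace E] (x ξ : E) :
    HasGradientAt (fun ζ : E => ‖ζ‖ ^ 4 + inner ℝ ζ x) ((4 * ‖ξ‖ ^ 2) • ξ + x) ξ := by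
  rw [hasGradientAt_iff_hasFDerivAt]
  have hsq : HasFDerivAt (fun ζ : E => ‖ζ‖ ^ 2) (2 • innerSL ℝ ξ) ξ :=
    (hasStrictFDerivAt_norm_sq ξ).hasFDerivAt
  have hinner : HasFDerivAt (fun ζ : E => inner ℝ ζ x) (innerSL ℝ x) ξ := by
    convert (innerSL ℝ x).hasFDerivAt (x := ξ) using 2 with ζ
    simp [real_inner_comm]
  have hfun : (fun ζ : E => ‖ζ‖ ^ 4 + inner ℝ ζ x) =
      fun ζ => ‖ζ‖ ^ 2 * ‖ζ‖ ^ 2 + inner ℝ ζ x := by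
    funext ζ
    ring
  rw [hfun]
  refine ((hsq.mul hsq).add hinner).congr_fderiv ?_
  ext v
  simp
  ring

theorem abs_four_mul_norm_pow_three_sub_norm_le {E : Type*} [NormedAddCommGroup E]
    [NormedSpace ℝ E] (x ξ : E) :
    |4 * ‖ξ‖ ^ 3 - ‖x‖| ≤ ‖(4 * ‖ξ‖ ^ 2) • ξ + x‖ := by
  have hξ : ‖(4 * ‖ξ‖ ^ 2) • ξ‖ = 4 * ‖ξ‖ ^ 3 := by
    rw [norm_smul, Real.norm_of_nonneg (by positivity)]
    ring
  have := abs_norm_sub_norm_le ((4 * ‖ξ‖ ^ 2) • ξ) (-x)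
  rwa [norm_neg, sub_neg_eq_add, hξ] at this

theorem four_mul_norm_smul_pow_three_eq_norm {E : Type*} [NormedAddCommGroup E]
    [NormedSpace ℝ E] (x : E) :
    4 * ‖(-((4 : ℝ) ^ ((1 : ℝ) / 3) * ‖x‖ ^ ((2 : ℝ) / 3))⁻¹) • x‖ ^ 3 = ‖x‖ := by
  rcases eq_or_ne x 0 with rfl | hx
  · simp
  have ha : 0 < ‖x‖ := norm_pos_iff.mpr hx
  have hcube4 : ((4 : ℝ) ^ ((1 : ℝ) / 3)) ^ 3 = 4 := by
    rw [← Real.rpow_natCast, ← Real.rpow_mul (by norm_num)]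
    norm_num
  have hcube : (‖x‖ ^ ((2 : ℝ) / 3)) ^ 3 = ‖x‖ ^ 2 := by
    rw [← Real.rpow_natCast, ← Real.rpow_mul ha.le, ← Real.rpow_natCast ‖x‖ 2]
    norm_num
  rw [norm_smul, norm_neg, norm_inv, Real.norm_of_nonneg (by positivity), inv_mul_eq_div,
    div_pow, mul_pow, hcube4, hcube]
  field_simp

theorem abs_cube_sub_cube_eq {r s : ℝ} (hr : 0 ≤ r) (hs : 0 ≤ s) :
    |r ^ 3 - s ^ 3| = |r - s| * (r ^ 2 + r * s + s ^ 2) := by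
  rw [← abs_of_nonneg (by positivity : 0 ≤ r ^ 2 + r * s + s ^ 2), ← abs_mul]
  ring_nf

theorem sq_le_abs_cube_sub_cube {r s : ℝ} (hr : 0 ≤ r) (hs : 0 ≤ s) (h : 1 ≤ |r - s|) :
    s ^ 2 ≤ |r ^ 3 - s ^ 3| := by
  rw [abs_cube_sub_cube_eq hr hs]
  nlinarith [mul_nonneg hr hs, sq_nonneg r, sq_nonneg s]

theorem cube_le_four_mul_abs_cube_sub_cube {r s : ℝ} (hs : 0 ≤ s) (h : 2 * s ≤ r) :
    r ^ 3 ≤ 4 * |r ^ 3 - s ^ 3| := by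
  have hr : 0 ≤ r := by linarith
  have : s ^ 3 ≤ r ^ 3 / 8 := by
    have := pow_le_pow_left₀ hs (show s ≤ r / 2 by linarith) 3
    linarith [show (r / 2) ^ 3 = r ^ 3 / 8 by ring]
  rw [abs_of_nonneg (by nlinarith [pow_nonneg hr 3])]
  linarith [pow_nonneg hr 3]

theorem stmt_5 : ∃ c : ℝ, 0 < c ∧
    ∀ (n : ℕ) (x : EuclideanSpace ℝ (Fin n)), x ≠ 0 →
      ∀ ξ : EuclideanSpace ℝ (Fin n),
        (1 ≤ |‖ξ‖ - ‖(-((4 : ℝ) ^ ((1 : ℝ) / 3) * ‖x‖ ^ ((2 : ℝ) / 3))⁻¹) • x‖| →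
          c * ‖(-((4 : ℝ) ^ ((1 : ℝ) / 3) * ‖x‖ ^ ((2 : ℝ) / 3))⁻¹) • x‖ ^ 2 ≤
            ‖gradient (fun ζ : EuclideanSpace ℝ (Fin n) => ‖ζ‖ ^ 4 + (inner ℝ ζ x : ℝ)) ξ‖) ∧
        (2 * ‖(-((4 : ℝ) ^ ((1 : ℝ) / 3) * ‖x‖ ^ ((2 : ℝ) / 3))⁻¹) • x‖ ≤ ‖ξ‖ → 1 ≤ ‖ξ‖ →
          c * ‖ξ‖ ^ 3 ≤
            ‖gradient (fun ζ : EuclideanSpace ℝ (Fin n) => ‖ζ‖ ^ 4 + (inner ℝ ζ x : ℝ)) ξ‖) := by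
  refine ⟨1, one_pos, fun n x _ ξ => ?_⟩
  set s := ‖(-((4 : ℝ) ^ ((1 : ℝ) / 3) * ‖x‖ ^ ((2 : ℝ) / 3))⁻¹) • x‖
  have hgrad : 4 * |‖ξ‖ ^ 3 - s ^ 3| ≤
      ‖gradient (fun ζ : EuclideanSpace ℝ (Fin n) => ‖ζ‖ ^ 4 + (inner ℝ ζ x : ℝ)) ξ‖ := by
    rw [(hasGradientAt_norm_pow_four_add_inner x ξ).gradient]
    have := abs_four_mul_norm_pow_three_sub_norm_le x ξ
    rwa [← four_mul_norm_smul_pow_three_eq_norm x, ← mul_sub, abs_mul, abs_of_pos four_pos]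
      at this
  refine ⟨fun h => ?_, fun h _ => ?_⟩
  · linarith [sq_le_abs_cube_sub_cube (norm_nonneg ξ) (norm_nonneg _) h,
      abs_nonneg (‖ξ‖ ^ 3 - s ^ 3)]
  · linarith [cube_le_four_mul_abs_cube_sub_cube (norm_nonneg _) h]
end
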